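/- arXiv:1101.3897 — 3 statements merged into one kernel-verified Lean document; each statement's English description precedes it below -/
import Mathlib

section
/- Let A be a torsion-free commutative ring and f : A → B a faithfully flat ring map. If G and G' are formal group laws over A such that f*G and f*G' are strictly isomorphic over B, then G and G' are strictly isomorphic over A. -/
/-!
Comparing coefficients of `x y^k` in `h(G(x,y)) = G'(h(x),h(y))`, and using `G(0,y) = y` and
`G(x,0) = x`, gives `(k + 1) h_{k+1} = P_k`, where `P_k` is a polynomial in
`h_0, …, h_k` with coefficients in `A`. So if `h_0, …, h_k` come from `A`, then `(k + 1) h_{k+1}`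
lies in the image of `A`; faithful flatness gives `(k + 1) B ∩ A = (k + 1) A`, and `k + 1` is a
nonzerodivisor on `B` because it is one on `A` and `B` is flat, so `h_{k+1}` comes from `A` too.
As `A → B` is injective, the lifted series is a strict isomorphism over `A`.
-/

open Finset

noncomputable section

/-- The exponent `(a, b)` viewed as a monomial index for `MvPowerSeries (Fin 2)`. -/
def idx (a b : ℕ) : Fin 2 →₀ ℕ := Finsupp.single 0 a + Finsupp.single 1 b

variable {R : Type*} [CommRing R]

/-- Substitution of a two-variable power series `F` (with zero constant term)
into a one-variable power series `h`, i.e. `h(F(x,y))`, defined coefficientwise. -/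
def substIn (h : PowerSeries R) (F : MvPowerSeries (Fin 2) R) : MvPowerSeries (Fin 2) R :=
  fun d => ∑ n ∈ Finset.range (d.sum (fun _ e => e) + 1),
    PowerSeries.coeff n h * MvPowerSeries.coeff d (F ^ n)

/-- Substitution of a one-variable power series `h` (with zero constant term) into
both variables of a two-variable power series `F`, i.e. `F(h(x), h(y))`. -/
def substVars (F : MvPowerSeries (Fin 2) R) (h : PowerSeries R) : MvPowerSeries (Fin 2) R :=
  fun d => ∑ a ∈ Finset.range (d 0 + 1), ∑ b ∈ Finset.range (d 1 + 1),
    MvPowerSeries.coeff (idx a b) F * (PowerSeries.coeff (d 0) (h ^ a)) *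
      (PowerSeries.coeff (d 1) (h ^ b))

/-- Coefficient of `x^i y^j z^k` in `F(F(x,y),z)`. -/
def assocL (F : MvPowerSeries (Fin 2) R) (i j k : ℕ) : R :=
  ∑ a ∈ Finset.range (i + j + 1),
    MvPowerSeries.coeff (idx a k) F * MvPowerSeries.coeff (idx i j) (F ^ a)

/-- Coefficient of `x^i y^j z^k` in `F(x,F(y,z))`. -/
def assocR (F : MvPowerSeries (Fin 2) R) (i j k : ℕ) : R :=
  ∑ b ∈ Finset.range (j + k + 1),
    MvPowerSeries.coeff (idx i b) F * MvPowerSeries.coeff (idx j k) (F ^ b)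

/-- A (commutative, one-dimensional) formal group law over a commutative ring `R`:
a two-variable power series `F` with `F(x,0) = x`, `F(0,y) = y`, commutativity and
associativity. -/
structure FormalGroupLaw (R : Type*) [CommRing R] where
  F : MvPowerSeries (Fin 2) R
  unit_left : ∀ n : ℕ, MvPowerSeries.coeff (idx n 0) F = if n = 1 then 1 else 0
  unit_right : ∀ n : ℕ, MvPowerSeries.coeff (idx 0 n) F = if n = 1 then 1 else 0
  comm : ∀ a b : ℕ, MvPowerSeries.coeff (idx a b) F = MvPowerSeries.coeff (idx b a) F
  assoc : ∀ i j k : ℕ, assocL F i j k = assocR F i j k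

/-- `h` is a strict isomorphism from the formal group law `F` to `F'`:
`h(x) = x + b₁x² + ⋯` and `h(F(x,y)) = F'(h(x),h(y))`. -/
def IsStrictIso (F F' : MvPowerSeries (Fin 2) R) (h : PowerSeries R) : Prop :=
  PowerSeries.constantCoeff h = 0 ∧ PowerSeries.coeff 1 h = 1 ∧
    substIn h F = substVars F' h

end

theorem Module.FaithfullyFlat.exists_algebraMap_eq_of_mul_eq {A B : Type*} [CommRing A]
    [CommRing B] [Algebra A B] [Module.FaithfullyFlat A B] {r : A} (hr : IsSMulRegular A r)
    {w : A} {b : B} (h : algebraMap A B r * b = algebraMap A B w) :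
    ∃ a, algebraMap A B a = b := by
  have hw : w ∈ Ideal.span {r} := by
    rw [← Ideal.comap_map_eq_self_of_faithfullyFlat (B := B) (Ideal.span {r}), Ideal.mem_comap,
      Ideal.map_span, Set.image_singleton, Ideal.mem_span_singleton']
    exact ⟨b, by rw [mul_comm, h]⟩
  obtain ⟨a, rfl⟩ := Ideal.mem_span_singleton'.1 hw
  refine ⟨a, hr.of_flat (S := B) ?_⟩
  simp only [smul_eq_mul, h, map_mul, mul_comm]

theorem isSMulRegular_natCast {A : Type*} [CommRing A] [NoZeroSMulDivisors ℤ A] {n : ℕ}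
    (hn : n ≠ 0) : IsSMulRegular A (n : A) := fun x y hxy =>
  IsSMulRegular.of_ne_zero (M := A) (Nat.cast_ne_zero.2 hn : (n : ℤ) ≠ 0)
    (by simpa [zsmul_eq_mul] using hxy)

section Coefficients

variable {R S : Type*} [CommRing R] [CommRing S]

theorem PowerSeries.exists_map_eq_of_forall_coeff_mem_range {f : R →+* S} {h : PowerSeries S}
    (hh : ∀ n, PowerSeries.coeff n h ∈ Set.range f) : ∃ h₀, PowerSeries.map f h₀ = h := by
  choose a ha using hh
  exact ⟨PowerSeries.mk a, by ext n; simp [ha]⟩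

@[simp]
theorem idx_apply_zero (a b : ℕ) : idx a b 0 = a := by
  simp [idx]

@[simp]
theorem idx_apply_one (a b : ℕ) : idx a b 1 = b := by
  simp [idx]

theorem idx_sum (a b : ℕ) : (idx a b).sum (fun _ e => e) = a + b := by
  rw [Finsupp.sum_fintype _ _ fun _ => rfl, Fin.sum_univ_two, idx_apply_zero, idx_apply_one]

theorem idx_eq_cons (a b : ℕ) : idx a b = Finsupp.cons a (Finsupp.single 0 b) := by
  ext i; fin_cases i <;> simp [idx, Finsupp.cons]

theorem coeff_idx_eq_coeff_finSuccEquiv (φ : MvPowerSeries (Fin 2) R) (a b : ℕ) :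
    MvPowerSeries.coeff (idx a b) φ = MvPowerSeries.coeff (Finsupp.single 0 b)
      (PowerSeries.coeff a (MvPowerSeries.finSuccEquiv R 1 φ)) := by
  rw [MvPowerSeries.coeff_coeff_finSuccEquiv, idx_eq_cons]

theorem coeff_idx_one_pow_succ {F : MvPowerSeries (Fin 2) R}
    (hy : ∀ n, MvPowerSeries.coeff (idx 0 n) F = if n = 1 then 1 else 0)
    (hx : MvPowerSeries.coeff (idx 1 0) F = 1) (k : ℕ) :
    MvPowerSeries.coeff (idx 1 k) (F ^ (k + 1)) = k + 1 := by
  -- `E F` is `F` viewed as a power series in `x` over `R⟦y⟧`, with constant term `F(0,y) = y`.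
  set E := MvPowerSeries.finSuccEquiv R 1
  have hE0 : PowerSeries.constantCoeff (E F) = MvPowerSeries.X 0 := by
    ext d
    obtain ⟨n, rfl⟩ : ∃ n, d = Finsupp.single 0 n := ⟨d 0, Finsupp.unique_single d⟩
    rw [← PowerSeries.coeff_zero_eq_constantCoeff_apply,
      ← coeff_idx_eq_coeff_finSuccEquiv, hy, MvPowerSeries.coeff_X]
    simp
  have hE1 : MvPowerSeries.constantCoeff (PowerSeries.coeff 1 (E F)) = 1 := by
    rw [← MvPowerSeries.coeff_zero_eq_constantCoeff_apply, ← Finsupp.single_zero 0,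
      ← coeff_idx_eq_coeff_finSuccEquiv, hx]
  rw [coeff_idx_eq_coeff_finSuccEquiv, map_pow, PowerSeries.coeff_one_pow, hE0,
    add_tsub_cancel_right, MvPowerSeries.X_pow_eq, MvPowerSeries.coeff_mul_monomial,
    if_pos le_rfl, tsub_self, mul_one, MvPowerSeries.coeff_zero_eq_constantCoeff_apply,
    map_mul, map_natCast, hE1, mul_one, Nat.cast_succ]

theorem coeff_substIn (h : PowerSeries R) (F : MvPowerSeries (Fin 2) R) (d : Fin 2 →₀ ℕ) :
    MvPowerSeries.coeff d (substIn h F) = ∑ n ∈ range (d.sum (fun _ e => e) + 1),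
      PowerSeries.coeff n h * MvPowerSeries.coeff d (F ^ n) := rfl

theorem coeff_substVars (F : MvPowerSeries (Fin 2) R) (h : PowerSeries R) (d : Fin 2 →₀ ℕ) :
    MvPowerSeries.coeff d (substVars F h) =
      ∑ a ∈ range (d 0 + 1), ∑ b ∈ range (d 1 + 1), MvPowerSeries.coeff (idx a b) F *
        PowerSeries.coeff (d 0) (h ^ a) * PowerSeries.coeff (d 1) (h ^ b) := rfl

theorem map_substIn (f : R →+* S) (h : PowerSeries R) (F : MvPowerSeries (Fin 2) R) :
    MvPowerSeries.map f (substIn h F) =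
      substIn (PowerSeries.map f h) (MvPowerSeries.map f F) := by
  ext d
  simp [coeff_substIn, ← map_pow]

theorem map_substVars (f : R →+* S) (F : MvPowerSeries (Fin 2) R) (h : PowerSeries R) :
    MvPowerSeries.map f (substVars F h) =
      substVars (MvPowerSeries.map f F) (PowerSeries.map f h) := by
  ext d
  simp [coeff_substVars, ← map_pow]

theorem IsStrictIso.of_map {f : R →+* S} (hf : Function.Injective f)
    {F F' : MvPowerSeries (Fin 2) R} {h : PowerSeries R}
    (hiso : IsStrictIso (MvPowerSeries.map f F) (MvPowerSeries.map f F') (PowerSeries.map f h)) :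
    IsStrictIso F F' h := by
  obtain ⟨h0, h1, hsubst⟩ := hiso
  refine ⟨hf ?_, hf ?_, ?_⟩
  · rwa [← PowerSeries.coeff_zero_eq_constantCoeff_apply, ← PowerSeries.coeff_map,
      PowerSeries.coeff_zero_eq_constantCoeff_apply, map_zero]
  · simpa using h1
  · ext d
    apply hf
    simpa [← map_substIn, ← map_substVars] using congr(MvPowerSeries.coeff d $hsubst)

noncomputable def FormalGroupLaw.map (f : R →+* S) (G : FormalGroupLaw R) :
    FormalGroupLaw S where
  F := MvPowerSeries.map f G.F
  unit_left n := by rw [MvPowerSeries.coeff_map, G.unit_left]; split_ifs <;> simp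
  unit_right n := by rw [MvPowerSeries.coeff_map, G.unit_right]; split_ifs <;> simp
  comm a b := by simp only [MvPowerSeries.coeff_map, G.comm a b]
  assoc i j k := by simpa [assocL, assocR, ← map_pow] using congr(f $(G.assoc i j k))

/-- Comparing coefficients of `x y^k` in `h(F(x,y)) = F'(h(x),h(y))` gives
`(k + 1) h_{k+1} = isoCoeffRecursion F F' h k`, whose right side involves only `h_0, …, h_k`. -/
noncomputable def isoCoeffRecursion (F F' : MvPowerSeries (Fin 2) R) (h : PowerSeries R)
    (k : ℕ) : R :=
  ∑ b ∈ range (k + 1), MvPowerSeries.coeff (idx 1 b) F' * PowerSeries.coeff k (h ^ b) -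
    ∑ m ∈ range (k + 1), PowerSeries.coeff m h * MvPowerSeries.coeff (idx 1 k) (F ^ m)

theorem map_isoCoeffRecursion (f : R →+* S) (F F' : MvPowerSeries (Fin 2) R)
    (h : PowerSeries R) (k : ℕ) :
    f (isoCoeffRecursion F F' h k) = isoCoeffRecursion (MvPowerSeries.map f F)
      (MvPowerSeries.map f F') (PowerSeries.map f h) k := by
  simp [isoCoeffRecursion, ← map_pow]

theorem isoCoeffRecursion_congr_trunc (F F' : MvPowerSeries (Fin 2) R) {h h' : PowerSeries R}
    {k : ℕ} (hh : PowerSeries.trunc (k + 1) h = PowerSeries.trunc (k + 1) h') :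
    isoCoeffRecursion F F' h k = isoCoeffRecursion F F' h' k := by
  have hcoeff : ∀ m ≤ k, PowerSeries.coeff m h = PowerSeries.coeff m h' := fun m hm => by
    simpa [PowerSeries.coeff_trunc, Nat.lt_succ_of_le hm] using
      congr(Polynomial.coeff $hh m)
  have hpow : ∀ b, PowerSeries.coeff k (h ^ b) = PowerSeries.coeff k (h' ^ b) := fun b => by
    simpa [PowerSeries.coeff_trunc] using
      congr(Polynomial.coeff (PowerSeries.trunc (k + 1) ((↑$hh : PowerSeries R) ^ b)) k)
  simp only [isoCoeffRecursion, hpow]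
  congr 1
  exact sum_congr rfl fun m hm => by rw [hcoeff m (Nat.lt_succ_iff.1 (mem_range.1 hm))]

theorem IsStrictIso.natCast_mul_coeff_succ (G : FormalGroupLaw R)
    {F' : MvPowerSeries (Fin 2) R} {h : PowerSeries R} (hiso : IsStrictIso G.F F' h) (k : ℕ) :
    (k + 1 : R) * PowerSeries.coeff (k + 1) h = isoCoeffRecursion G.F F' h k := by
  obtain ⟨-, h1, hsubst⟩ := hiso
  have hcoeff := congr(MvPowerSeries.coeff (idx 1 k) $hsubst)
  have hR : MvPowerSeries.coeff (idx 1 k) (substVars F' h) =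
      ∑ b ∈ range (k + 1), MvPowerSeries.coeff (idx 1 b) F' * PowerSeries.coeff k (h ^ b) := by
    rw [coeff_substVars, idx_apply_zero, idx_apply_one, sum_range_succ, sum_range_one]
    simp [h1]
  rw [coeff_substIn, idx_sum, Nat.add_comm 1 k, sum_range_succ,
    coeff_idx_one_pow_succ G.unit_right (by simpa using G.unit_left 1), hR] at hcoeff
  unfold isoCoeffRecursion
  linear_combination hcoeff

end Coefficients

theorem IsStrictIso.coeff_succ_mem_range {A B : Type*} [CommRing A] [CommRing B] [Algebra A B]
    [NoZeroSMulDivisors ℤ A] [Module.FaithfullyFlat A B] (G : FormalGroupLaw A)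
    {F' : MvPowerSeries (Fin 2) A} {h : PowerSeries B}
    (hiso : IsStrictIso (G.map (algebraMap A B)).F (MvPowerSeries.map (algebraMap A B) F') h)
    {k : ℕ} (hk : ∀ m ≤ k, PowerSeries.coeff m h ∈ Set.range (algebraMap A B)) :
    PowerSeries.coeff (k + 1) h ∈ Set.range (algebraMap A B) := by
  obtain ⟨P, hP⟩ := PowerSeries.exists_map_eq_of_forall_coeff_mem_range
    (h := (PowerSeries.trunc (k + 1) h : PowerSeries B)) fun m => by
      rw [Polynomial.coeff_coe, PowerSeries.coeff_trunc]
      split_ifs with hm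
      · exact hk m (Nat.le_of_lt_succ hm)
      · exact ⟨0, map_zero _⟩
  have hrec := hiso.natCast_mul_coeff_succ _ k
  rw [isoCoeffRecursion_congr_trunc _ _ (h' := PowerSeries.map (algebraMap A B) P)
    (by rw [hP, PowerSeries.trunc_trunc]), FormalGroupLaw.map, ← map_isoCoeffRecursion] at hrec
  exact Module.FaithfullyFlat.exists_algebraMap_eq_of_mul_eq
    (isSMulRegular_natCast k.succ_ne_zero) (by simpa using hrec)

/-- If `A` is torsion-free and `A → B` is faithfully flat, then two
formal group laws over `A` which become strictly isomorphic over `B` are already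
strictly isomorphic over `A`. -/
theorem fgl_descent_of_faithfullyFlat
    {A B : Type*} [CommRing A] [CommRing B] [Algebra A B]
    [NoZeroSMulDivisors ℤ A] [Module.FaithfullyFlat A B]
    (G G' : FormalGroupLaw A) (h : PowerSeries B)
    (hiso : IsStrictIso (MvPowerSeries.map (algebraMap A B) G.F)
      (MvPowerSeries.map (algebraMap A B) G'.F) h) :
    ∃ h₀ : PowerSeries A, IsStrictIso G.F G'.F h₀ := by
  have hcoeff : ∀ n, PowerSeries.coeff n h ∈ Set.range (algebraMap A B) := by
    intro n
    induction n using Nat.strong_induction_on with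
    | _ n ih =>
      cases n with
      | zero => exact ⟨0, by rw [map_zero, PowerSeries.coeff_zero_eq_constantCoeff_apply, hiso.1]⟩
      | succ k =>
        exact IsStrictIso.coeff_succ_mem_range G hiso fun m hm => ih m (Nat.lt_succ_of_le hm)
  obtain ⟨h₀, rfl⟩ := PowerSeries.exists_map_eq_of_forall_coeff_mem_range hcoeff
  exact ⟨h₀, hiso.of_map (FaithfulSMul.algebraMap_injective A B)⟩
end

section
/- Let f : A → B be a faithfully flat ring map. Then A is the equalizer of the two maps η_L, η_R : B → B ⊗_A B given by b ↦ b ⊗ 1 and b ↦ 1 ⊗ b; that is, the sequence 0 → A → B → B ⊗_A B is exact. -/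
open TensorProduct

/-- For a faithfully flat map `A → B`, the map `A → B` is
injective and an element `b : B` satisfies `b ⊗ 1 = 1 ⊗ b` in `B ⊗[A] B` if and
only if it comes from `A`. -/
theorem faithfullyFlat_equalizer
    {A B : Type*} [CommRing A] [CommRing B] [Algebra A B]
    [Module.FaithfullyFlat A B] :
    Function.Injective (algebraMap A B) ∧
      ∀ b : B, (b ⊗ₜ[A] (1 : B) = (1 : B) ⊗ₜ[A] b) ↔ b ∈ (algebraMap A B).range := by
  refine ⟨FaithfulSMul.algebraMap_injective A B, fun b ↦ ?_⟩
  rw [← sub_eq_zero, ← Algebra.TensorProduct.includeLeftSubRight_apply]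
  exact Algebra.IsEffective.of_faithfullyFlat A B b
end

section
/- Let B̃ be the 2-adic completion of Z₂((t)) (equivalently of W(F₄)((t)), restricted to the Z₂-coefficient subring), and let α ∈ B̃ be the unique solution of α³ − tα − 2 = 0. Then α is divisible by 2 in B̃, and c := (1/2)αt satisfies the equation c = −1 + 4 t^{−3} c³. This recursion has a unique solution in the 2-adic completion of Z₂[t^{−3}], namely c = −1 − 4t^{−3} − 48t^{−6} − 192t^{−9} − ⋯; in particular c lies in the subring which is the 2-adic completion of Z₂[t^{−3}]. -/
/-!
Modulo 2, `ℤ₂((t))` becomes the field `𝔽₂((t))`, in which `t` is not a square (its order is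
odd); hence `α (α² - t) = 2 ≡ 0` forces `2 ∣ α`. Writing `α = 2β` and cancelling the
non-zero-divisor 2 turns the cubic into `4β³ = tβ + 1`, i.e. `c = βt` solves
`c = -1 + 4t⁻³c³`. The map `x ↦ -1 + 4ux³` shrinks 2-adic distances by a factor 2, so in a
2-adically complete ring it has exactly one fixed point, the limit of its iterates from `-1`;
these iterates lie in the subring generated by `t⁻³`.
-/

noncomputable section

/-- `ℤ₂[[t]][t⁻¹] = ℤ₂((t))`. -/
abbrev LaurentZ2 := Localization.Away (PowerSeries.X : PowerSeries ℤ_[2])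

end

open Function PowerSeries

section AdicLimits

variable {R : Type*} [CommRing R] {a : R}

theorem Ideal.mem_span_singleton_pow {x : R} {n : ℕ} : x ∈ Ideal.span {a} ^ n ↔ a ^ n ∣ x := by
  rw [Ideal.span_singleton_pow, Ideal.mem_span_singleton]

theorem IsHausdorff.eq_zero_of_forall_pow_dvd [IsHausdorff (Ideal.span {a}) R] {x : R}
    (h : ∀ n, a ^ n ∣ x) : x = 0 :=
  IsHausdorff.haus ‹_› x fun n => SModEq.zero.2 <| by
    rw [smul_eq_mul, Ideal.mul_top]; exact Ideal.mem_span_singleton_pow.2 (h n)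

theorem IsPrecomplete.exists_forall_pow_dvd_sub [IsPrecomplete (Ideal.span {a}) R] (d : ℕ → R)
    (hd : ∀ m n, m ≤ n → a ^ m ∣ d n - d m) : ∃ L, ∀ n, a ^ n ∣ L - d n := by
  obtain ⟨L, hL⟩ := IsPrecomplete.prec ‹_› (f := d) fun {m n} hmn => by
    rw [SModEq.sub_mem, smul_eq_mul, Ideal.mul_top, Ideal.mem_span_singleton_pow]
    exact dvd_sub_comm.1 (hd m n hmn)
  refine ⟨L, fun n => ?_⟩
  have := (hL n).symm
  rwa [SModEq.sub_mem, smul_eq_mul, Ideal.mul_top, Ideal.mem_span_singleton_pow] at this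

end AdicLimits

section AdicContraction

variable {R : Type*} [CommRing R] {a : R} {g : R → R}

theorem pow_mul_sub_dvd_iterate_sub (hg : ∀ x y, a * (x - y) ∣ g x - g y) (n : ℕ) (x y : R) :
    a ^ n * (x - y) ∣ g^[n] x - g^[n] y := by
  induction n generalizing x y with
  | zero => simp
  | succ n ih =>
    simp only [iterate_succ_apply]
    exact (pow_succ a n ▸ mul_assoc (a ^ n) a (x - y) ▸ mul_dvd_mul_left _ (hg x y)).trans (ih _ _)

theorem eq_of_isFixedPt [IsHausdorff (Ideal.span {a}) R] (hg : ∀ x y, a * (x - y) ∣ g x - g y)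
    {x y : R} (hx : IsFixedPt g x) (hy : IsFixedPt g y) : x = y := by
  refine sub_eq_zero.1 <| IsHausdorff.eq_zero_of_forall_pow_dvd (a := a) fun n => ?_
  have := pow_mul_sub_dvd_iterate_sub hg n x y
  rw [(hx.iterate n).eq, (hy.iterate n).eq] at this
  exact (dvd_mul_right _ _).trans this

theorem exists_isFixedPt_forall_pow_dvd_sub_iterate [IsAdicComplete (Ideal.span {a}) R]
    (hg : ∀ x y, a * (x - y) ∣ g x - g y) (x₀ : R) :
    ∃ c, IsFixedPt g c ∧ ∀ n, a ^ n ∣ c - g^[n] x₀ := by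
  obtain ⟨c, hc⟩ := IsPrecomplete.exists_forall_pow_dvd_sub (fun n => g^[n] x₀) fun m n hmn => by
    obtain ⟨k, rfl⟩ := Nat.exists_eq_add_of_le hmn
    rw [iterate_add_apply]
    exact (dvd_mul_right _ _).trans (pow_mul_sub_dvd_iterate_sub hg m _ _)
  refine ⟨c, sub_eq_zero.1 <| IsHausdorff.eq_zero_of_forall_pow_dvd (a := a) fun n => ?_, hc⟩
  have hstep : a ^ n ∣ g c - g (g^[n] x₀) := (dvd_mul_of_dvd_right (hc n) a).trans (hg _ _)
  have hnext : a ^ n ∣ c - g (g^[n] x₀) :=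
    (pow_dvd_pow a n.le_succ).trans (iterate_succ_apply' g n x₀ ▸ hc (n + 1))
  simpa using dvd_sub hstep hnext

end AdicContraction

section CubicRecursion

variable {R : Type*} [CommRing R]

def cubicStep (u x : R) : R := -1 + 4 * u * x ^ 3

theorem two_mul_sub_dvd_cubicStep_sub (u x y : R) :
    2 * (x - y) ∣ cubicStep u x - cubicStep u y :=
  ⟨2 * u * (x ^ 2 + x * y + y ^ 2), by unfold cubicStep; ring⟩

theorem mapsTo_cubicStep {S : Subring R} {u : R} (hu : u ∈ S) :
    Set.MapsTo (cubicStep u) S S := fun _ hx =>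
  add_mem (neg_mem (one_mem S)) (mul_mem (mul_mem (ofNat_mem S 4) hu) (pow_mem hx 3))

end CubicRecursion

theorem PowerSeries.C_dvd_of_forall_dvd_coeff {R : Type*} [CommSemiring R] {r : R} {q : R⟦X⟧}
    (h : ∀ n, r ∣ coeff n q) : C r ∣ q := by
  choose d hd using h
  exact ⟨mk d, by ext n; rw [coeff_C_mul, coeff_mk, ← hd]⟩

theorem PowerSeries.two_dvd_of_map_toZMod_eq_zero {q : ℤ_[2]⟦X⟧}
    (h : map PadicInt.toZMod q = 0) : 2 ∣ q := by
  rw [← map_ofNat C]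
  refine C_dvd_of_forall_dvd_coeff fun n => ?_
  have : coeff n q ∈ RingHom.ker (PadicInt.toZMod (p := 2)) := by
    simpa using congrArg (coeff n) h
  rw [PadicInt.ker_toZMod, PadicInt.maximalIdeal_eq_span_p, Ideal.mem_span_singleton] at this
  exact_mod_cast this

theorem LaurentSeries.sq_ne_X {K : Type*} [Semiring K] [NoZeroDivisors K] [Nontrivial K]
    (z : LaurentSeries K) : z ^ 2 ≠ HahnSeries.single 1 1 := by
  intro h
  have := congrArg HahnSeries.order h
  rw [HahnSeries.order_pow, HahnSeries.order_single one_ne_zero, nsmul_eq_mul] at this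
  omega

namespace LaurentZ2

theorem two_mem_nonZeroDivisors : (2 : LaurentZ2) ∈ nonZeroDivisors LaurentZ2 := by
  have h2 : (2 : ℤ_[2]⟦X⟧) ≠ 0 := by
    rw [← map_ofNat C]; exact (map_ne_zero_iff _ C_injective).2 two_ne_zero
  exact map_ofNat (algebraMap ℤ_[2]⟦X⟧ LaurentZ2) 2 ▸
    IsLocalization.nonZeroDivisors_le_comap (.powers X) LaurentZ2
      (mem_nonZeroDivisors_of_ne_zero h2)

noncomputable def reduction : LaurentZ2 →+* LaurentSeries (ZMod 2) :=
  IsLocalization.map (M := .powers X) (T := .powers X) (LaurentSeries (ZMod 2))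
    (map (PadicInt.toZMod (p := 2))) (Submonoid.powers_le.2 ⟨1, by simp⟩)

theorem reduction_algebraMap (p : ℤ_[2]⟦X⟧) :
    reduction (algebraMap _ _ p) = HahnSeries.ofPowerSeries ℤ _ (map PadicInt.toZMod p) :=
  IsLocalization.map_eq _ p

theorem two_dvd_of_reduction_eq_zero {y : LaurentZ2} (h : reduction y = 0) : 2 ∣ y := by
  obtain ⟨⟨p, s⟩, rfl⟩ := IsLocalization.mk'_surjective (Submonoid.powers (X : ℤ_[2]⟦X⟧)) y
  obtain ⟨⟨_, j, rfl⟩, hj⟩ :=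
    (IsLocalization.mk'_eq_zero_iff _ _).1 ((IsLocalization.map_mk' _ p s).symm.trans h)
  have hp : map PadicInt.toZMod p = 0 :=
    (mul_eq_zero.1 hj).resolve_left (pow_ne_zero j X_ne_zero)
  obtain ⟨p', rfl⟩ := two_dvd_of_map_toZMod_eq_zero hp
  exact ⟨IsLocalization.mk' _ p' s, by
    rw [← map_ofNat (algebraMap ℤ_[2]⟦X⟧ LaurentZ2) 2, IsLocalization.mul_mk'_eq_mk'_of_mul]⟩

theorem two_dvd_of_two_dvd_mul_sq_sub_X {y : LaurentZ2}
    (h : 2 ∣ y * (y ^ 2 - algebraMap ℤ_[2]⟦X⟧ LaurentZ2 X)) : 2 ∣ y := by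
  refine two_dvd_of_reduction_eq_zero ?_
  obtain ⟨z, hz⟩ := h
  have h2 : (2 : LaurentSeries (ZMod 2)) = 0 := by
    rw [← map_ofNat (HahnSeries.C (Γ := ℤ) (R := ZMod 2)) 2]
    exact (map_eq_zero_iff _ HahnSeries.C_injective).2 rfl
  have := congrArg reduction hz
  rw [map_mul reduction 2, map_ofNat, h2, zero_mul, map_mul, map_sub, map_pow,
    reduction_algebraMap, map_X, HahnSeries.ofPowerSeries_X] at this
  exact (mul_eq_zero.1 this).resolve_right (sub_ne_zero.2 (LaurentSeries.sq_ne_X _))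

end LaurentZ2

section ReductionTower

variable {A B : Type*} [CommRing A] [CommRing B] {f : A →+* B} {a : A} {b : B}

def InducesIsoModPow (f : A →+* B) (a : A) (b : B) : Prop :=
  ∀ n : ℕ, Surjective ((Ideal.Quotient.mk (Ideal.span {b} ^ n)).comp f) ∧
    RingHom.ker ((Ideal.Quotient.mk (Ideal.span {b} ^ n)).comp f) = Ideal.span {a} ^ n

theorem InducesIsoModPow.exists_pow_dvd_sub (h : InducesIsoModPow f a b) (n : ℕ) (x : B) :
    ∃ y, b ^ n ∣ f y - x := by
  obtain ⟨y, hy⟩ := (h n).1 (Ideal.Quotient.mk _ x)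
  exact ⟨y, Ideal.mem_span_singleton_pow.1 ((Ideal.Quotient.mk_eq_mk_iff_sub_mem _ _).1 hy)⟩

theorem InducesIsoModPow.pow_dvd_of_pow_dvd_map (h : InducesIsoModPow f a b) {n : ℕ} {y : A}
    (hy : b ^ n ∣ f y) : a ^ n ∣ y := by
  have : y ∈ RingHom.ker ((Ideal.Quotient.mk (Ideal.span {b} ^ n)).comp f) :=
    Ideal.Quotient.eq_zero_iff_mem.2 (Ideal.mem_span_singleton_pow.2 hy)
  rwa [(h n).2, Ideal.mem_span_singleton_pow] at this

theorem InducesIsoModPow.eq_zero_of_mul_eq_zero [IsHausdorff (Ideal.span {b}) B]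
    (h : InducesIsoModPow f a b) (ha : a ∈ nonZeroDivisors A) (hab : f a = b) {x : B}
    (hx : b * x = 0) : x = 0 := by
  refine IsHausdorff.eq_zero_of_forall_pow_dvd (a := b) fun n => ?_
  obtain ⟨y, hy⟩ := h.exists_pow_dvd_sub (n + 1) x
  have hay : a ^ (n + 1) ∣ a * y := h.pow_dvd_of_pow_dvd_map <| by
    rw [map_mul, hab, ← sub_zero (b * f y), ← hx, ← mul_sub]
    exact dvd_mul_of_dvd_right hy b
  obtain ⟨r, hr⟩ := hay
  have hy' : y = a ^ n * r := (mul_cancel_left_mem_nonZeroDivisors ha).1 (by rw [hr]; ring)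
  have hfy : b ^ n ∣ f y := ⟨f r, by rw [hy', map_mul, map_pow, hab]⟩
  simpa using dvd_sub hfy ((pow_dvd_pow b n.le_succ).trans hy)

theorem InducesIsoModPow.dvd_of_dvd_mul_sq_sub (h : InducesIsoModPow f a b) (hab : f a = b)
    {s : A} (hs : ∀ y, a ∣ y * (y ^ 2 - s) → a ∣ y) {x : B} (hx : b ∣ x * (x ^ 2 - f s)) :
    b ∣ x := by
  obtain ⟨y, hy⟩ := h.exists_pow_dvd_sub 1 x
  rw [pow_one] at hy
  have hfy : b ∣ f (y * (y ^ 2 - s)) := by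
    have : f (y * (y ^ 2 - s)) =
        (f y - x) * (f y ^ 2 + f y * x + x ^ 2 - f s) + x * (x ^ 2 - f s) := by
      simp only [map_mul, map_sub, map_pow]; ring
    rw [this]
    exact dvd_add (dvd_mul_of_dvd_left hy _) hx
  have hay : a ∣ y := hs y <| by simpa using h.pow_dvd_of_pow_dvd_map (n := 1) (by rwa [pow_one])
  have hby : b ∣ f y := hab ▸ map_dvd f hay
  simpa only [sub_sub_cancel] using dvd_sub hby hy

end ReductionTower

/-- `B̃` is modelled as a 2-adically complete ring with a map `f` from `ℤ₂((t))` inducing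
isomorphisms modulo all powers of 2, and "`b` lies in the 2-adic completion of `ℤ₂[t⁻³]`" as:
`b` is congruent modulo every `2^k` to an element of the subring generated by `ℤ₂` and `t⁻³`. -/
theorem c_recursion_in_completion
    (Bt : Type) [CommRing Bt] (f : LaurentZ2 →+* Bt)
    (hcomplete : IsAdicComplete (Ideal.span {(2 : Bt)}) Bt)
    (htower : ∀ n : ℕ,
      Function.Surjective ((Ideal.Quotient.mk ((Ideal.span {(2 : Bt)}) ^ n)).comp f) ∧
      RingHom.ker ((Ideal.Quotient.mk ((Ideal.span {(2 : Bt)}) ^ n)).comp f) =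
        (Ideal.span {(2 : LaurentZ2)}) ^ n)
    (α : Bt)
    (hα : α ^ 3 - f (algebraMap (PowerSeries ℤ_[2]) LaurentZ2 PowerSeries.X) * α - 2 = 0) :
    letI tB : Bt := f (algebraMap (PowerSeries ℤ_[2]) LaurentZ2 PowerSeries.X)
    letI tinv : Bt := f (IsLocalization.Away.invSelf (S := LaurentZ2) (PowerSeries.X : PowerSeries ℤ_[2]))
    letI S₀ : Subring Bt := Subring.closure
      ({tinv ^ 3} ∪ Set.range (fun z : ℤ_[2] =>
        f (algebraMap (PowerSeries ℤ_[2]) LaurentZ2 (PowerSeries.C z))))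
    letI P : Bt → Prop := fun b =>
      ∀ k : ℕ, ∃ y ∈ S₀, b - y ∈ (Ideal.span {(2 : Bt)}) ^ k
    (∃ β : Bt, α = 2 * β) ∧
    (∃ c : Bt,
      2 * c = α * tB ∧
      c = -1 + 4 * tinv ^ 3 * c ^ 3 ∧
      P c ∧
      (∀ c' : Bt, 2 * c' = α * tB → c' = c) ∧
      (∀ c'' : Bt, P c'' → c'' = -1 + 4 * tinv ^ 3 * c'' ^ 3 → c'' = c)) := by
  set tB := f (algebraMap ℤ_[2]⟦X⟧ LaurentZ2 X)
  set tinv := f (IsLocalization.Away.invSelf (S := LaurentZ2) (X : ℤ_[2]⟦X⟧))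
  have hinv : tB * tinv = 1 := by rw [← map_mul, IsLocalization.Away.mul_invSelf, map_one]
  replace htower : InducesIsoModPow f 2 2 := htower
  have hreg : ∀ x : Bt, 2 * x = 0 → x = 0 := fun _ =>
    htower.eq_zero_of_mul_eq_zero LaurentZ2.two_mem_nonZeroDivisors (map_ofNat f 2)
  obtain ⟨β, rfl⟩ : (2 : Bt) ∣ α := htower.dvd_of_dvd_mul_sq_sub (map_ofNat f 2)
    (fun _ => LaurentZ2.two_dvd_of_two_dvd_mul_sq_sub_X) ⟨1, by linear_combination hα⟩
  have hcubic : 4 * β ^ 3 - tB * β - 1 = 0 := hreg _ (by linear_combination hα)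
  have hfix : IsFixedPt (cubicStep (tinv ^ 3)) (β * tB) := by
    unfold IsFixedPt cubicStep
    linear_combination hcubic + 4 * β ^ 3 * ((tB * tinv) ^ 2 + tB * tinv + 1) * hinv
  obtain ⟨c, hc, hlim⟩ :=
    exists_isFixedPt_forall_pow_dvd_sub_iterate (two_mul_sub_dvd_cubicStep_sub (tinv ^ 3)) (-1)
  have hβc : β * tB = c := eq_of_isFixedPt (two_mul_sub_dvd_cubicStep_sub _) hfix hc
  refine ⟨⟨β, rfl⟩, c, by rw [← hβc]; ring, hc.symm,
    fun k => ⟨_, ?_, Ideal.mem_span_singleton_pow.2 (hlim k)⟩,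
    fun c' hc' => sub_eq_zero.1 (hreg _ ?_),
    fun c'' _ hc'' => eq_of_isFixedPt (two_mul_sub_dvd_cubicStep_sub _) hc''.symm hc⟩
  · refine (mapsTo_cubicStep ?_).iterate k (Subring.neg_mem _ (Subring.one_mem _))
    exact Subring.subset_closure (Set.mem_union_left _ rfl)
  · linear_combination hc' + 2 * hβc
end
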